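/- As s → ∞, the vector e^{As} e_1 converges to e_N, the last standard basis vector of ℝ^N; in particular lim_{s→∞} wᵀ e^{As} e_1 = 1. -/

import Mathlib

/-!
Write `P(s) = e^{As} v`, so `P' = A P`. Row `j` of this system reads
`P_j' = d_{j-1} P_{j-1} - d_j P_j` with rates `d_j > 0` for every state but the last, so by
induction on `j` each `P_j` with `j < N - 1` is the solution of a stable scalar equation driven
by a forcing term tending to `0`, and therefore tends to `0` itself. The columns of `A` sum to
zero, so `∑ P_j` is constant, and the remaining mass ends up in the last state.
-/

open Matrix Filter Topology

theorem Matrix.hasDerivAt_exp_smul_mulVec {n : Type*} [Fintype n] [DecidableEq n]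
    (A : Matrix n n ℝ) (v : n → ℝ) (s : ℝ) :
    HasDerivAt (fun t : ℝ => NormedSpace.exp (t • A) *ᵥ v)
      (A *ᵥ (NormedSpace.exp (s • A) *ᵥ v)) s := by
  let _ : NormedRing (Matrix n n ℝ) := Matrix.linftyOpNormedRing
  let _ : NormedAlgebra ℝ (Matrix n n ℝ) := Matrix.linftyOpNormedAlgebra
  let applyV : Matrix n n ℝ →L[ℝ] n → ℝ :=
    (LinearMap.applyₗ v ∘ₗ Matrix.toLin'.toLinearMap).toContinuousLinearMap
  rw [Matrix.mulVec_mulVec]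
  exact applyV.hasFDerivAt.comp_hasDerivAt s (hasDerivAt_exp_smul_const' A s)

theorem Matrix.sum_exp_smul_mulVec_of_one_vecMul_eq_zero {n : Type*} [Fintype n] [DecidableEq n]
    {A : Matrix n n ℝ} (hA : 1 ᵥ* A = 0) (v : n → ℝ) (s : ℝ) :
    ∑ j, (NormedSpace.exp (s • A) *ᵥ v) j = ∑ j, v j := by
  have hderiv (t : ℝ) : HasDerivAt (fun u => ∑ j, (NormedSpace.exp (u • A) *ᵥ v) j) 0 t := by
    have := HasDerivAt.fun_sum (u := Finset.univ) fun j _ =>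
      hasDerivAt_pi.1 (hasDerivAt_exp_smul_mulVec A v t) j
    rwa [← one_dotProduct, dotProduct_mulVec, hA, zero_dotProduct] at this
  simpa using is_const_of_deriv_eq_zero (fun t => (hderiv t).differentiableAt)
    (fun t => (hderiv t).deriv) s 0

/-- `B s = ε + (f T - ε) e^{-a (s - T)}` solves `B' = a ε - a B` with `B T = f T`, and `f` cannot
cross it from below while `g < a ε`. -/
theorem le_of_hasDerivAt_sub_mul {f g : ℝ → ℝ} {a ε T : ℝ}
    (hf : ∀ s, HasDerivAt f (g s - a * f s) s) (hg : ∀ s ≥ T, g s < a * ε) {s : ℝ} (hs : T ≤ s) :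
    f s ≤ ε + (f T - ε) * Real.exp (-(a * (s - T))) := by
  set B : ℝ → ℝ := fun s => ε + (f T - ε) * Real.exp (-(a * (s - T))) with hB_def
  have hB (x : ℝ) : HasDerivAt B (a * ε - a * B x) x := by
    have := ((((hasDerivAt_id x).sub_const T).const_mul a).neg.exp.const_mul (f T - ε)).const_add ε
    exact this.congr_deriv (by simp only [hB_def, Pi.neg_apply, id]; ring)
  refine image_le_of_deriv_right_lt_deriv_boundary
    (fun x _ => (hf x).continuousAt.continuousWithinAt) (fun x _ => (hf x).hasDerivWithinAt)
    (by simp [B]) hB ?_ ⟨hs, le_rfl⟩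
  intro x hx hfx
  rw [hfx]
  linarith [hg x hx.1]

theorem eventually_lt_of_hasDerivAt_sub_mul {f g : ℝ → ℝ} {a : ℝ} (ha : 0 < a)
    (hf : ∀ s, HasDerivAt f (g s - a * f s) s) (hg : Tendsto g atTop (𝓝 0))
    {u : ℝ} (hu : 0 < u) : ∀ᶠ s in atTop, f s < u := by
  obtain ⟨T, hT⟩ :=
    eventually_atTop.1 (hg.eventually (gt_mem_nhds (by positivity : 0 < a * (u / 2))))
  have hdecay : Tendsto (fun s => u / 2 + (f T - u / 2) * Real.exp (-(a * (s - T)))) atTop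
      (𝓝 (u / 2 + (f T - u / 2) * 0)) :=
    ((Real.tendsto_exp_neg_atTop_nhds_zero.comp
      ((tendsto_id.atTop_add tendsto_const_nhds).const_mul_atTop ha)).const_mul _).const_add _
  rw [mul_zero, add_zero] at hdecay
  filter_upwards [eventually_ge_atTop T,
    hdecay.eventually (gt_mem_nhds (show u / 2 < u by linarith))] with s hs hlt
  exact (le_of_hasDerivAt_sub_mul hf hT hs).trans_lt hlt

theorem tendsto_zero_of_hasDerivAt_sub_mul {f g : ℝ → ℝ} {a : ℝ} (ha : 0 < a)
    (hf : ∀ s, HasDerivAt f (g s - a * f s) s) (hg : Tendsto g atTop (𝓝 0)) :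
    Tendsto f atTop (𝓝 0) := by
  refine tendsto_order.2
    ⟨fun l hl => ?_, fun u hu => eventually_lt_of_hasDerivAt_sub_mul ha hf hg hu⟩
  have hneg := eventually_lt_of_hasDerivAt_sub_mul (f := fun s => -f s) (g := fun s => -g s) ha
    (fun s => (hf s).neg.congr_deriv (by ring)) (by simpa using hg.neg) (neg_pos.2 hl)
  filter_upwards [hneg] with s hs
  linarith

theorem Fin.sum_ite_val_eq {M : Type*} [AddCommMonoid M] {N m : ℕ} (hm : m < N)
    (f : Fin N → M) : ∑ j : Fin N, (if (j : ℕ) = m then f j else 0) = f ⟨m, hm⟩ := by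
  simp_rw [show ∀ j : Fin N, (j : ℕ) = m ↔ j = ⟨m, hm⟩ from fun j => by simp [Fin.ext_iff]]
  simp

/-- Indices are `0`-based: state `k` has `k + 1` infected agents and is left at rate `d k`. -/
def pureBirthGenerator (N : ℕ) (d : ℕ → ℝ) : Matrix (Fin N) (Fin N) ℝ :=
  fun i j => if (i : ℕ) = j then -d i else if (i : ℕ) = j + 1 then d j else 0

namespace pureBirthGenerator

variable {N : ℕ} {d : ℕ → ℝ}

theorem mulVec_zero_apply (hN : 0 < N) (v : Fin N → ℝ) :
    (pureBirthGenerator N d *ᵥ v) ⟨0, hN⟩ = -(d 0 * v ⟨0, hN⟩) := by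
  simp only [mulVec, dotProduct]
  rw [Fintype.sum_eq_single ⟨0, hN⟩ fun k hk => ?_]
  · simp [pureBirthGenerator]
  · simp only [ne_eq, Fin.ext_iff] at hk
    simp only [pureBirthGenerator]
    rw [if_neg (by omega), if_neg (by omega), zero_mul]

theorem mulVec_succ_apply {j : ℕ} (hj : j + 1 < N) (v : Fin N → ℝ) :
    (pureBirthGenerator N d *ᵥ v) ⟨j + 1, hj⟩ =
      d j * v ⟨j, by omega⟩ - d (j + 1) * v ⟨j + 1, hj⟩ := by
  simp only [mulVec, dotProduct]
  rw [Fintype.sum_eq_add ⟨j, by omega⟩ ⟨j + 1, hj⟩ (by simp [Fin.ext_iff]) fun k hk => ?_]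
  · simp [pureBirthGenerator]
    ring
  · simp only [ne_eq, Fin.ext_iff] at hk
    simp only [pureBirthGenerator]
    rw [if_neg (by omega), if_neg (by omega), zero_mul]

theorem one_vecMul (hd : d (N - 1) = 0) : 1 ᵥ* pureBirthGenerator N d = 0 := by
  ext k
  simp only [vecMul, dotProduct, Pi.one_apply, one_mul, Pi.zero_apply]
  by_cases hk : (k : ℕ) + 1 < N
  · rw [Fintype.sum_eq_add k ⟨k + 1, hk⟩ (by simp [Fin.ext_iff]) fun i hi => ?_]
    · simp [pureBirthGenerator]
    · simp only [ne_eq, Fin.ext_iff] at hi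
      simp only [pureBirthGenerator]
      rw [if_neg (by omega), if_neg (by omega)]
  · rw [Fintype.sum_eq_single k fun i hi => ?_]
    · simp [pureBirthGenerator, show (k : ℕ) = N - 1 by omega, hd]
    · rw [ne_eq, Fin.ext_iff] at hi
      simp only [pureBirthGenerator]
      rw [if_neg hi, if_neg (by omega)]

theorem tendsto_exp_smul_mulVec_apply_of_lt (hpos : ∀ j, j + 1 < N → 0 < d j)
    (v : Fin N → ℝ) {j : ℕ} (hj : j + 1 < N) :
    Tendsto (fun s : ℝ => (NormedSpace.exp (s • pureBirthGenerator N d) *ᵥ v) ⟨j, by omega⟩)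
      atTop (𝓝 0) := by
  have hderiv (s : ℝ) (k : Fin N) := hasDerivAt_pi.1
    (hasDerivAt_exp_smul_mulVec (pureBirthGenerator N d) v s) k
  induction j with
  | zero =>
    refine tendsto_zero_of_hasDerivAt_sub_mul (hpos 0 hj) (g := 0) (fun s => ?_) tendsto_const_nhds
    exact (hderiv s ⟨0, by omega⟩).congr_deriv (by rw [mulVec_zero_apply]; simp)
  | succ j ih =>
    refine tendsto_zero_of_hasDerivAt_sub_mul (hpos (j + 1) hj) (fun s => ?_)
      (by simpa using (ih (by omega)).const_mul (d j))
    exact (hderiv s ⟨j + 1, by omega⟩).congr_deriv (by rw [mulVec_succ_apply])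

theorem tendsto_exp_smul_mulVec (hpos : ∀ j, j + 1 < N → 0 < d j) (hlast : d (N - 1) = 0)
    (v : Fin N → ℝ) :
    Tendsto (fun s : ℝ => NormedSpace.exp (s • pureBirthGenerator N d) *ᵥ v) atTop
      (𝓝 fun j => if (j : ℕ) = N - 1 then ∑ k, v k else 0) := by
  set P := fun s : ℝ => NormedSpace.exp (s • pureBirthGenerator N d) *ᵥ v
  have hlower (k : Fin N) (hk : (k : ℕ) ≠ N - 1) : Tendsto (fun s => P s k) atTop (𝓝 0) := by
    simpa using tendsto_exp_smul_mulVec_apply_of_lt hpos v (j := k) (by omega)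
  refine tendsto_pi_nhds.2 fun j => ?_
  split_ifs with hj
  · have hmass (s : ℝ) : P s j = ∑ k, v k - ∑ k ∈ Finset.univ.erase j, P s k := by
      rw [← sum_exp_smul_mulVec_of_one_vecMul_eq_zero (one_vecMul hlast) v s,
        ← Finset.add_sum_erase _ _ (Finset.mem_univ j)]
      ring
    have hrest := tendsto_finsetSum (Finset.univ.erase j) fun k hk =>
      hlower k fun hk' => (Finset.ne_of_mem_erase hk) (Fin.ext (hk'.trans hj.symm))
    rw [Finset.sum_const_zero] at hrest
    rw [← sub_zero (∑ k, v k)]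
    exact (tendsto_const_nhds.sub hrest).congr fun s => (hmass s).symm
  · exact hlower j hj

end pureBirthGenerator

/-- As `s → ∞`, `e^{As} e₁` converges to the last standard basis vector `e_N`, and hence
`wᵀ e^{As} e₁ → 1` (everyone eventually gets infected in the Infection model). -/
theorem infection_exp_tendsto_last (N : ℕ) (hN : 2 ≤ N) (lc : ℝ) (hlc : 0 < lc)
    (A : Matrix (Fin N) (Fin N) ℝ)
    (hA : ∀ i j : Fin N, A i j =
      if (i : ℕ) = (j : ℕ) then
        -((((i : ℕ) : ℝ) + 1) * ((N : ℝ) - (((i : ℕ) : ℝ) + 1)) * lc)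
      else if (i : ℕ) = (j : ℕ) + 1 then
        (((j : ℕ) : ℝ) + 1) * ((N : ℝ) - (((j : ℕ) : ℝ) + 1)) * lc
      else 0)
    (w : Fin N → ℝ) (hw : ∀ k : Fin N, w k = ((k : ℕ) : ℝ) / ((N : ℝ) - 1))
    (e1 : Fin N → ℝ) (he1 : ∀ j : Fin N, e1 j = if (j : ℕ) = 0 then 1 else 0)
    (eN : Fin N → ℝ) (heN : ∀ j : Fin N, eN j = if (j : ℕ) = N - 1 then 1 else 0) :
    Tendsto (fun s : ℝ => NormedSpace.exp (s • A) *ᵥ e1) atTop (nhds eN) ∧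
    Tendsto (fun s : ℝ => w ⬝ᵥ (NormedSpace.exp (s • A) *ᵥ e1)) atTop (nhds 1) := by
  set d : ℕ → ℝ := fun j => ((j : ℝ) + 1) * ((N : ℝ) - ((j : ℝ) + 1)) * lc
  have hd_pos (j : ℕ) (hj : j + 1 < N) : 0 < d j := by
    have hj' : 0 < (N : ℝ) - ((j : ℝ) + 1) := sub_pos.2 (by exact_mod_cast hj)
    simp only [d]
    positivity
  have hd_last : d (N - 1) = 0 := by
    simp [d, Nat.cast_sub (by omega : 1 ≤ N)]
  have he1_sum : ∑ j, e1 j = 1 := by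
    simpa [he1] using Fin.sum_ite_val_eq (by omega : 0 < N) (fun _ => (1 : ℝ))
  have hlim : Tendsto (fun s : ℝ => NormedSpace.exp (s • A) *ᵥ e1) atTop (nhds eN) := by
    have heN' : eN = fun j : Fin N => if (j : ℕ) = N - 1 then ∑ k, e1 k else 0 := by
      funext j; rw [heN, he1_sum]
    rw [heN', Matrix.ext hA]
    exact pureBirthGenerator.tendsto_exp_smul_mulVec hd_pos hd_last e1
  have hw_eN : w ⬝ᵥ eN = 1 := by
    have hN1 : (N : ℝ) - 1 ≠ 0 := by
      have : (2 : ℝ) ≤ N := by exact_mod_cast hN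
      linarith
    simp only [dotProduct, heN, mul_ite, mul_one, mul_zero]
    rw [Fin.sum_ite_val_eq (by omega), hw, Fin.val_mk, Nat.cast_sub (by omega : 1 ≤ N),
      Nat.cast_one, div_self hN1]
  exact ⟨hlim, hw_eN ▸ ((continuous_const.dotProduct continuous_id).tendsto eN).comp hlim⟩
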